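/- arXiv:2509.17279 — 6 statements merged into one kernel-verified Lean document; each statement's English description precedes it below -/
import Mathlib

section
/- Let B be a commutative ring and let f be a polynomial in B[X] such that, in the polynomial ring B[X,Y], one has f(X+Y) = f(X) + f(Y) and f(X·Y) = f(X)·f(Y), and such that f(1) = 1. If the B-algebra endomorphism of B[X] determined by X ↦ f is bijective, then f = X. (Equivalently: every automorphism of the affine line over B as a ring scheme is the identity.) -/
open Polynomial

/-!
Comparing coefficients in `f(XY) = f(X) f(Y)` shows that the coefficients `aₖ` of `f` are
orthogonal idempotents, so `aₙ • f = aₙ • Xⁿ`. If `X = g(f)`, multiplying by `aₙ` gives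
`aₙ X = aₙ g(Xⁿ)`, whose linear coefficient vanishes when `n ≠ 1`. Hence `f = a₁ X`,
and `f(1) = 1` forces `a₁ = 1`.
-/

namespace Polynomial

variable {R : Type*} [CommRing R]

theorem coeff_expand_one_of_ne_one {n : ℕ} (hn : n ≠ 1) (g : R[X]) :
    (expand R n g).coeff 1 = 0 := by
  rcases n.eq_zero_or_pos with rfl | hpos
  · simp [expand_zero]
  · rw [coeff_expand hpos, if_neg (mt Nat.dvd_one.mp hn)]

theorem mul_aeval_eq_mul_aeval_of_mul_eq {A : Type*} [CommRing A] [Algebra R A] {e p q : A}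
    (h : e * p = e * q) (g : R[X]) : e * aeval p g = e * aeval q g := by
  obtain ⟨c, hc⟩ := sub_dvd_eval_sub p q (g.map (algebraMap R A))
  rw [← sub_eq_zero, ← mul_sub, aeval_def, aeval_def, ← eval_map, ← eval_map, hc, ← mul_assoc,
    mul_sub, h, sub_self, zero_mul]

theorem eq_C_mul_X_of_coeff_eq_zero {p : R[X]} (h : ∀ n, n ≠ 1 → p.coeff n = 0) :
    p = C (p.coeff 1) * X := by
  ext n
  rcases eq_or_ne n 1 with rfl | hn
  · simp
  · simp [h n hn, coeff_X, Ne.symm hn]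

theorem aeval_eq_comp_map_C (f : R[X]) (p : R[X][X]) : aeval p f = (f.map C).comp p := by
  rw [comp, eval₂_map]
  rfl

theorem coeff_mul_coeff_of_aeval_mul {f : R[X]}
    (hmul : aeval ((MvPolynomial.X 0 : MvPolynomial (Fin 2) R) * MvPolynomial.X 1) f
      = aeval (MvPolynomial.X 0 : MvPolynomial (Fin 2) R) f
        * aeval (MvPolynomial.X 1 : MvPolynomial (Fin 2) R) f) (k l : ℕ) :
    f.coeff k * f.coeff l = if k = l then f.coeff k else 0 := by
  have h := congrArg (MvPolynomial.aeval ![(C X : R[X][X]), X]) hmul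
  simp only [← aeval_algHom_apply, map_mul, MvPolynomial.aeval_X, Matrix.cons_val_zero,
    Matrix.cons_val_one, aeval_eq_comp_map_C, comp_X, comp_C, eval_map, eval₂_C_X] at h
  have := congrArg (fun p : R[X][X] => (p.coeff l).coeff k) h
  simp only [comp_C_mul_X_coeff, coeff_map, coeff_mul_C, coeff_C_mul, coeff_X_pow] at this
  rw [← this]
  split_ifs with hkl <;> simp [hkl]

theorem C_coeff_mul_eq_C_coeff_mul_X_pow {f : R[X]}
    (h : ∀ k l, f.coeff k * f.coeff l = if k = l then f.coeff k else 0) (n : ℕ) :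
    C (f.coeff n) * f = C (f.coeff n) * X ^ n := by
  ext m
  rw [coeff_C_mul, coeff_C_mul, coeff_X_pow, mul_comm, h m n]
  split_ifs with hmn
  · rw [hmn, mul_one]
  · rw [mul_zero]

theorem coeff_eq_zero_of_X_mem_range_aeval {f : R[X]}
    (h : ∀ k l, f.coeff k * f.coeff l = if k = l then f.coeff k else 0)
    (hX : X ∈ Set.range (aeval (R := R) f)) {n : ℕ} (hn : n ≠ 1) : f.coeff n = 0 := by
  obtain ⟨g, hg⟩ := hX
  have := congrArg (coeff · 1)
    (mul_aeval_eq_mul_aeval_of_mul_eq (C_coeff_mul_eq_C_coeff_mul_X_pow h n) g)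
  have hexpand : aeval (X ^ n) g = expand R n g := rfl
  simpa [hg, hexpand, coeff_expand_one_of_ne_one hn] using this

end Polynomial

theorem stmt_0_general (B : Type*) [CommRing B] (f : B[X])
    (hmul : Polynomial.aeval ((MvPolynomial.X 0 : MvPolynomial (Fin 2) B) * MvPolynomial.X 1) f
      = Polynomial.aeval (MvPolynomial.X 0 : MvPolynomial (Fin 2) B) f
        * Polynomial.aeval (MvPolynomial.X 1 : MvPolynomial (Fin 2) B) f)
    (hone : Polynomial.eval (1 : B) f = 1)
    (hbij : Function.Bijective (Polynomial.aeval f : B[X] →ₐ[B] B[X])) :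
    f = Polynomial.X := by
  have hcoeff := coeff_mul_coeff_of_aeval_mul hmul
  have hlin : f = C (f.coeff 1) * X := eq_C_mul_X_of_coeff_eq_zero fun n hn =>
    coeff_eq_zero_of_X_mem_range_aeval hcoeff (hbij.surjective X) hn
  rw [hlin, eval_C_mul, eval_X, mul_one] at hone
  rw [hlin, hone, C_1, one_mul]

/-- Every automorphism of the affine line over `B` as a ring scheme is the identity:
if `f ∈ B[X]` satisfies `f(X+Y) = f(X) + f(Y)`, `f(X·Y) = f(X)·f(Y)` and `f(1) = 1`,
and the `B`-algebra endomorphism `X ↦ f` of `B[X]` is bijective, then `f = X`. -/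
theorem stmt_0 (B : Type*) [CommRing B] (f : B[X])
    (hadd : Polynomial.aeval ((MvPolynomial.X 0 : MvPolynomial (Fin 2) B) + MvPolynomial.X 1) f
      = Polynomial.aeval (MvPolynomial.X 0 : MvPolynomial (Fin 2) B) f
        + Polynomial.aeval (MvPolynomial.X 1 : MvPolynomial (Fin 2) B) f)
    (hmul : Polynomial.aeval ((MvPolynomial.X 0 : MvPolynomial (Fin 2) B) * MvPolynomial.X 1) f
      = Polynomial.aeval (MvPolynomial.X 0 : MvPolynomial (Fin 2) B) f
        * Polynomial.aeval (MvPolynomial.X 1 : MvPolynomial (Fin 2) B) f)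
    (hone : Polynomial.eval (1 : B) f = 1)
    (hbij : Function.Bijective (Polynomial.aeval f : B[X] →ₐ[B] B[X])) :
    f = Polynomial.X :=
  stmt_0_general B f hmul hone hbij
end

section
/- Let k be a perfect field of characteristic p > 0 and let B be a commutative k-algebra. Let T be the base-change functor from the category of commutative k-algebras to the category of commutative B-algebras sending R to B ⊗_k R (and a k-algebra map f to id_B ⊗ f). Then every natural isomorphism from T to itself is the identity natural transformation. -/
/-!
By naturality, `η` is determined by the image of the generic element `1 ⊗ X` of
`B ⊗[k] k[X] ≅ B[X]`: if this image is the polynomial `q`, then `η_R (1 ⊗ r) = q(1 ⊗ r)` for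
every `R` and `r`. Multiplicativity of `η` on `k[X][Y]`, i.e. `q(XY) = q(X) q(Y)`, read off at
`Y¹`, gives `q · q₁ = q₁ · X` for the linear coefficient `q₁`; multiplicativity on `k[X]` gives
`q'ⁿ = q'(Xⁿ)` for the polynomial `q'` of `η⁻¹`. Since `q ∘ q' = X`, comparing linear
coefficients yields `q₁ q'₁ = 1`, hence `q = X` and `η` is the identity.
-/

open TensorProduct Polynomial

universe u v

namespace Polynomial

variable {R : Type*} [CommSemiring R]

theorem coeff_one_aeval_C_X_mul_X (P : R[X]) :
    (aeval (C X * X : R[X][X]) P).coeff 1 = C (P.coeff 1) * X := by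
  rw [aeval_eq_sum_range' (Nat.lt_add_of_pos_right two_pos : P.natDegree < P.natDegree + 2),
    finsetSum_coeff]
  simp only [mul_pow, coeff_smul, ← C_pow, coeff_C_mul_X_pow]
  simp [smul_eq_C_mul]

theorem coeff_one_aeval_C_X_mul_aeval_X (P : R[X]) :
    (aeval (C X : R[X][X]) P * aeval X P).coeff 1 = P * C (P.coeff 1) := by
  rw [← algebraMap_eq (R := R[X]), aeval_algebraMap_apply, aeval_X_left_apply, algebraMap_eq,
    aeval_X_left_eq_map, coeff_C_mul, coeff_map, algebraMap_eq]

theorem eq_X_of_comp_eq_X {P Q : R[X]} (hP : P * C (P.coeff 1) = C (P.coeff 1) * X)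
    (hQ : ∀ n, Q ^ n = expand R n Q) (h : P.comp Q = X) : P = X := by
  have hQ_pow_coeff_one (n : ℕ) : (Q ^ n).coeff 1 = if n = 1 then Q.coeff 1 else 0 := by
    rcases n with _ | _ | n
    · simp [coeff_one]
    · simp
    · rw [hQ, coeff_expand (by omega)]
      simp
  have hunit : P.coeff 1 * Q.coeff 1 = 1 := by
    have h₁ := congr(coeff $h 1)
    rw [comp_eq_aeval,
      aeval_eq_sum_range' (Nat.lt_add_of_pos_right two_pos : P.natDegree < P.natDegree + 2),
      finsetSum_coeff] at h₁
    simpa [hQ_pow_coeff_one] using h₁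
  calc P = P * C (P.coeff 1 * Q.coeff 1) := by rw [hunit, C_1, mul_one]
    _ = C (P.coeff 1 * Q.coeff 1) * X := by rw [C_mul, ← mul_assoc, hP]; ring
    _ = X := by rw [hunit, C_1, one_mul]

end Polynomial

section PolyEquivTensor

variable {k : Type*} [CommSemiring k] {B : Type*} [CommSemiring B] [Algebra k B]

theorem polyEquivTensor'_X : polyEquivTensor' k B X = 1 ⊗ₜ X := by
  simp

theorem polyEquivTensor'_symm_one_tmul (p : k[X]) :
    (polyEquivTensor' k B).symm (1 ⊗ₜ p) = p.map (algebraMap k B) := by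
  simp

end PolyEquivTensor

theorem AlgEquiv.eq_refl_of_apply_one_tmul {k B R : Type*} [CommSemiring k] [CommSemiring B]
    [Algebra k B] [CommSemiring R] [Algebra k R] (f : B ⊗[k] R ≃ₐ[B] B ⊗[k] R)
    (hf : ∀ r, f (1 ⊗ₜ r) = 1 ⊗ₜ r) : f = AlgEquiv.refl := by
  apply AlgEquiv.coe_toAlgHom_injective
  ext r
  exact hf r

namespace BaseChange

variable {k : Type u} [CommRing k] {B : Type v} [CommRing B] [Algebra k B]

def IsNatural (η : ∀ (R : Type u) [CommRing R] [Algebra k R], (B ⊗[k] R) →ₐ[B] (B ⊗[k] R)) :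
    Prop :=
  ∀ (R : Type u) [CommRing R] [Algebra k R] (S : Type u) [CommRing S] [Algebra k S]
    (f : R →ₐ[k] S),
    (Algebra.TensorProduct.map (AlgHom.id B B) f).comp (η R)
      = (η S).comp (Algebra.TensorProduct.map (AlgHom.id B B) f)

theorem IsNatural.symm
    {η : ∀ (R : Type u) [CommRing R] [Algebra k R], (B ⊗[k] R) ≃ₐ[B] (B ⊗[k] R)}
    (hη : IsNatural fun R _ _ => (η R).toAlgHom) :
    IsNatural fun R _ _ => (η R).symm.toAlgHom := by
  intro R _ _ S _ _ f
  refine AlgHom.ext fun x => ?_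
  have h := congr($(hη R S f) ((η R).symm x))
  simp only [AlgHom.coe_comp, AlgEquiv.coe_toAlgHom, Function.comp_apply,
    AlgEquiv.apply_symm_apply] at h ⊢
  rw [h, AlgEquiv.symm_apply_apply]

noncomputable def classifyingPoly
    (η : ∀ (R : Type u) [CommRing R] [Algebra k R], (B ⊗[k] R) →ₐ[B] (B ⊗[k] R)) : B[X] :=
  (polyEquivTensor' k B).symm (η k[X] (1 ⊗ₜ X))

variable {η : ∀ (R : Type u) [CommRing R] [Algebra k R], (B ⊗[k] R) →ₐ[B] (B ⊗[k] R)}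

theorem IsNatural.apply_one_tmul (hη : IsNatural η) {R : Type u} [CommRing R] [Algebra k R]
    (r : R) : η R (1 ⊗ₜ r) = aeval (1 ⊗ₜ r) (classifyingPoly η) := by
  have hX : η k[X] (1 ⊗ₜ X) = aeval (1 ⊗ₜ[k] (X : k[X])) (classifyingPoly η) := by
    conv_rhs => rw [← polyEquivTensor'_X, aeval_algHom_apply, aeval_X_left_apply,
      classifyingPoly, AlgEquiv.apply_symm_apply]
  have h := congr($(hη k[X] R (aeval r)) (1 ⊗ₜ X))
  simp only [AlgHom.comp_apply, Algebra.TensorProduct.map_tmul, AlgHom.id_apply, aeval_X] at h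
  rw [← h, hX, ← aeval_algHom_apply, Algebra.TensorProduct.map_tmul, AlgHom.id_apply, aeval_X]

theorem IsNatural.classifyingPoly_pow (hη : IsNatural η) (n : ℕ) :
    classifyingPoly η ^ n = expand B n (classifyingPoly η) := by
  have h := congr((polyEquivTensor' k B).symm $(map_pow (η k[X]) (1 ⊗ₜ X) n))
  rw [Algebra.TensorProduct.tmul_pow, one_pow, hη.apply_one_tmul, hη.apply_one_tmul, ← map_pow,
    ← aeval_algHom_apply, ← aeval_algHom_apply, polyEquivTensor'_symm_one_tmul,
    polyEquivTensor'_symm_one_tmul] at h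
  simpa [expand_eq_comp_X_pow, comp_eq_aeval] using h.symm

theorem IsNatural.classifyingPoly_mul_C_coeff_one (hη : IsNatural η) :
    classifyingPoly η * C ((classifyingPoly η).coeff 1)
      = C ((classifyingPoly η).coeff 1) * X := by
  let φ : B ⊗[k] k[X][X] →ₐ[B] B[X][X] :=
    Algebra.TensorProduct.productLeftAlgHom (Algebra.ofId B B[X][X])
      (mapAlgHom (mapAlgHom (Algebra.ofId k B)))
  -- after applying `φ`, `h` reads `q(C X * X) = q(C X) * q(X)` in `B[X][X]`
  have h := congr(φ $(map_mul (η k[X][X]) (1 ⊗ₜ C X) (1 ⊗ₜ X)))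
  rw [Algebra.TensorProduct.tmul_mul_tmul, one_mul] at h
  simp only [hη.apply_one_tmul, ← aeval_algHom_apply, map_mul] at h
  simp only [φ, Algebra.TensorProduct.lift_tmul, map_one, one_mul, coe_mapAlgHom,
    mapAlgHom_coe_ringHom, Algebra.toRingHom_ofId, Polynomial.map_mul, map_C, coe_mapRingHom,
    map_X] at h
  rw [← coeff_one_aeval_C_X_mul_aeval_X, ← coeff_one_aeval_C_X_mul_X, h]

theorem IsNatural.classifyingPoly_comp (hη : IsNatural η)
    {θ : ∀ (R : Type u) [CommRing R] [Algebra k R], (B ⊗[k] R) →ₐ[B] (B ⊗[k] R)}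
    (hθ : IsNatural θ) :
    (polyEquivTensor' k B).symm (θ k[X] (η k[X] (1 ⊗ₜ X)))
      = (classifyingPoly η).comp (classifyingPoly θ) := by
  rw [hη.apply_one_tmul, ← aeval_algHom_apply, hθ.apply_one_tmul, ← aeval_algHom_apply,
    ← aeval_algHom_apply, polyEquivTensor'_symm_one_tmul, map_X, aeval_X_left_apply,
    comp_eq_aeval]

end BaseChange

theorem stmt_1_general (k : Type u) [Field k]
    (B : Type u) [CommRing B] [Algebra k B]
    (η : ∀ (R : Type u) [CommRing R] [Algebra k R], (B ⊗[k] R) ≃ₐ[B] (B ⊗[k] R))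
    (hnat : ∀ (R : Type u) [CommRing R] [Algebra k R] (S : Type u) [CommRing S] [Algebra k S]
      (f : R →ₐ[k] S),
      (Algebra.TensorProduct.map (AlgHom.id B B) f).comp (η R).toAlgHom
        = ((η S).toAlgHom).comp (Algebra.TensorProduct.map (AlgHom.id B B) f)) :
    ∀ (R : Type u) [CommRing R] [Algebra k R], η R = AlgEquiv.refl := by
  intro R _ _
  have hη : BaseChange.IsNatural fun R _ _ => (η R).toAlgHom := hnat
  have hq : BaseChange.classifyingPoly (fun R _ _ => (η R).toAlgHom) = X := by
    refine eq_X_of_comp_eq_X hη.classifyingPoly_mul_C_coeff_one hη.symm.classifyingPoly_pow ?_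
    rw [← hη.classifyingPoly_comp hη.symm]
    simp
  refine (η R).eq_refl_of_apply_one_tmul fun r => ?_
  simpa [hq] using hη.apply_one_tmul r

/-- Every natural isomorphism of the base-change functor `R ↦ B ⊗[k] R` (from commutative
`k`-algebras to commutative `B`-algebras) is the identity, where `k` is a perfect field of
characteristic `p > 0`. Naturality is expressed with respect to all `k`-algebra maps, via
`Algebra.TensorProduct.map (AlgHom.id B B) f`, and the components are `B`-algebra
isomorphisms. -/
theorem stmt_1 (p : ℕ) [Fact p.Prime]
    (k : Type u) [Field k] [CharP k p] [PerfectRing k p]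
    (B : Type u) [CommRing B] [Algebra k B]
    (η : ∀ (R : Type u) [CommRing R] [Algebra k R], (B ⊗[k] R) ≃ₐ[B] (B ⊗[k] R))
    (hnat : ∀ (R : Type u) [CommRing R] [Algebra k R] (S : Type u) [CommRing S] [Algebra k S]
      (f : R →ₐ[k] S),
      (Algebra.TensorProduct.map (AlgHom.id B B) f).comp (η R).toAlgHom
        = ((η S).toAlgHom).comp (Algebra.TensorProduct.map (AlgHom.id B B) f)) :
    ∀ (R : Type u) [CommRing R] [Algebra k R], η R = AlgEquiv.refl :=
  stmt_1_general k B η hnat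
end

section
/- Let k be a field of characteristic p > 0 and let f be a nonzero polynomial in k[X] such that, in the polynomial ring k[X,Y], one has f(X+Y) = f(X) + f(Y) and f(X·Y) = f(X)·f(Y). Then there exists a natural number n with f = X^{p^n}. -/
open Polynomial

section Aux

variable {k : Type*} [Field k]

private lemma stmt5_aux_CX (f : k[X]) :
    Polynomial.aeval (Polynomial.C Polynomial.X : Polynomial (Polynomial k)) f
      = Polynomial.C f := by
  have := Polynomial.aeval_algHom_apply (R := k) (CAlgHom : k[X] →ₐ[k] (k[X])[X]) X f
  simpa using this

private lemma stmt5_aux_Y (f : k[X]) :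
    Polynomial.aeval (Polynomial.X : Polynomial (Polynomial k)) f
      = f.map Polynomial.C := by
  induction f using Polynomial.induction_on with
  | C a => simp [Polynomial.algebraMap_apply]
  | add p q hp hq => simp [hp, hq]
  | monomial n a h => simp_all [pow_succ, mul_assoc, Polynomial.algebraMap_apply]

private lemma stmt5_coeff_lhs (f : k[X]) (j : ℕ) (hj : j ≤ f.natDegree) :
    (Polynomial.aeval ((Polynomial.C Polynomial.X : Polynomial (Polynomial k))
      * Polynomial.X) f).coeff j = Polynomial.C (f.coeff j) * Polynomial.X ^ j := by
  rw [Polynomial.aeval_eq_sum_range, Polynomial.finset_sum_coeff]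
  simp only [mul_pow, ← Polynomial.C_pow, Polynomial.coeff_smul, Polynomial.coeff_C_mul,
    Polynomial.coeff_X_pow, mul_ite, mul_one, mul_zero, smul_ite, smul_zero]
  rw [Finset.sum_ite_eq (Finset.range (f.natDegree + 1)) j
      (fun i => f.coeff i • Polynomial.X ^ i),
    if_pos (Finset.mem_range.mpr (Nat.lt_succ_of_le hj)), Polynomial.smul_eq_C_mul]

/-- Composition with `X ^ q` (for `q ≠ 0`) is injective. -/
private lemma stmt5_comp_inj {q : ℕ} (hq : q ≠ 0) {g h : k[X]}
    (H : g.comp (Polynomial.X ^ q) = h.comp (Polynomial.X ^ q)) : g = h := by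
  by_contra hne
  have hr : g - h ≠ 0 := sub_ne_zero.mpr hne
  have hcomp : (g - h).comp (Polynomial.X ^ q) = 0 := by
    rw [Polynomial.sub_comp, H, sub_self]
  have hdeg : (Polynomial.X ^ q : k[X]).natDegree ≠ 0 := by
    simpa [Polynomial.natDegree_X_pow] using hq
  have := Polynomial.leadingCoeff_comp (p := g - h) hdeg
  rw [hcomp, Polynomial.leadingCoeff_zero] at this
  have : (g - h).leadingCoeff = 0 := by
    have h2 : (Polynomial.X ^ q : k[X]).leadingCoeff = 1 := by
      simp [Polynomial.leadingCoeff_X_pow]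
    rw [h2, one_pow, mul_one] at this
    exact this.symm
  exact hr (Polynomial.leadingCoeff_eq_zero.mp this)

end Aux

/-- Over a field `k` of characteristic `p > 0`, a nonzero polynomial `f ∈ k[X]` that is both
additive (`f(X+Y) = f(X) + f(Y)`) and multiplicative (`f(X·Y) = f(X)·f(Y)`) is `X^(p^n)`
for some natural number `n`. -/
theorem stmt_5 (p : ℕ) [Fact p.Prime] (k : Type*) [Field k] [CharP k p]
    (f : k[X]) (hf : f ≠ 0)
    (hadd : Polynomial.aeval ((MvPolynomial.X 0 : MvPolynomial (Fin 2) k) + MvPolynomial.X 1) f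
      = Polynomial.aeval (MvPolynomial.X 0 : MvPolynomial (Fin 2) k) f
        + Polynomial.aeval (MvPolynomial.X 1 : MvPolynomial (Fin 2) k) f)
    (hmul : Polynomial.aeval ((MvPolynomial.X 0 : MvPolynomial (Fin 2) k) * MvPolynomial.X 1) f
      = Polynomial.aeval (MvPolynomial.X 0 : MvPolynomial (Fin 2) k) f
        * Polynomial.aeval (MvPolynomial.X 1 : MvPolynomial (Fin 2) k) f) :
    ∃ n : ℕ, f = Polynomial.X ^ p ^ n := by
  have hp : p.Prime := Fact.out
  set d := f.natDegree with hd
  -- Step 1: `f = X ^ d` from multiplicativity.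
  have hfd : f = Polynomial.X ^ d := by
    have H := congrArg (MvPolynomial.aeval (R := k) (S₁ := Polynomial (Polynomial k))
      ![Polynomial.C Polynomial.X, Polynomial.X]) hmul
    rw [map_mul, ← Polynomial.aeval_algHom_apply, ← Polynomial.aeval_algHom_apply,
      ← Polynomial.aeval_algHom_apply] at H
    simp only [map_mul, MvPolynomial.aeval_X, Matrix.cons_val_zero, Matrix.cons_val_one,
      Matrix.head_cons, stmt5_aux_CX, stmt5_aux_Y] at H
    have H2 := congrArg (fun g => Polynomial.coeff g d) H
    simp only [stmt5_coeff_lhs f d le_rfl, Polynomial.coeff_C_mul, Polynomial.coeff_map] at H2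
    -- H2 : C (f.coeff d) * X ^ d = f * C (f.coeff d)
    have hcd : f.coeff d ≠ 0 := Polynomial.coeff_ne_zero_of_eq_degree ?_
    · have hC : (Polynomial.C (f.coeff d) : k[X]) ≠ 0 := by
        simpa using hcd
      apply mul_left_cancel₀ hC
      rw [H2, mul_comm]
    · rw [Polynomial.degree_eq_natDegree hf]
  -- Step 2: `(1 + X) ^ d = 1 + X ^ d` from additivity.
  have Hadd : ((1 : k[X]) + Polynomial.X) ^ d = 1 + Polynomial.X ^ d := by
    have H := congrArg (MvPolynomial.aeval (R := k) (S₁ := k[X])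
      ![(1 : k[X]), Polynomial.X]) hadd
    rw [map_add, ← Polynomial.aeval_algHom_apply, ← Polynomial.aeval_algHom_apply,
      ← Polynomial.aeval_algHom_apply] at H
    simp only [MvPolynomial.aeval_X, Matrix.cons_val_zero, Matrix.cons_val_one,
      Matrix.head_cons] at H
    rw [hfd] at H
    simpa using H
  -- Step 3: `d ≠ 0`.
  have hd0 : d ≠ 0 := by
    intro h0
    rw [h0] at Hadd
    simp at Hadd
  -- Step 4: decompose `d = p ^ n * m` with `p ∤ m`.
  set n := d.factorization p with hn
  set m := d / p ^ n with hm
  have hdm : p ^ n * m = d := Nat.ordProj_mul_ordCompl_eq_self d p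
  have hpm : ¬ p ∣ m := Nat.not_dvd_ordCompl hp hd0
  have hm0 : m ≠ 0 := by
    intro h0
    rw [h0, mul_zero] at hdm
    exact hd0 hdm.symm
  -- Step 5: deduce `(1 + X) ^ m = 1 + X ^ m`.
  have hq0 : p ^ n ≠ 0 := pow_ne_zero n hp.pos.ne'
  have Hfrob : ((1 : k[X]) + Polynomial.X) ^ (p ^ n) = 1 + Polynomial.X ^ (p ^ n) := by
    simpa using add_pow_char_pow (1 : k[X]) Polynomial.X (p := p) (n := n)
  have Hm : ((1 : k[X]) + Polynomial.X) ^ m = 1 + Polynomial.X ^ m := by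
    apply stmt5_comp_inj hq0
    have e1 : (((1 : k[X]) + Polynomial.X) ^ m).comp (Polynomial.X ^ (p ^ n))
        = (1 + Polynomial.X ^ (p ^ n)) ^ m := by
      simp [Polynomial.pow_comp, Polynomial.add_comp]
    have e2 : ((1 + Polynomial.X ^ m : k[X])).comp (Polynomial.X ^ (p ^ n))
        = 1 + Polynomial.X ^ d := by
      simp [Polynomial.add_comp, Polynomial.pow_comp, ← pow_mul, mul_comm, hdm]
    rw [e1, e2, ← Hfrob, ← pow_mul, hdm, Hadd]
  -- Step 6: `m = 1`.
  have hm1 : m = 1 := by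
    by_contra hm1
    have hm2 : 2 ≤ m := (Nat.two_le_iff m).mpr ⟨hm0, hm1⟩
    have := congrArg (fun g => Polynomial.coeff g 1) Hm
    simp only [Polynomial.coeff_one_add_X_pow, Polynomial.coeff_add, Polynomial.coeff_one,
      Polynomial.coeff_X_pow] at this
    rw [if_neg (by omega : (1 : ℕ) ≠ 0), if_neg (by omega : (1 : ℕ) = m → False)] at this
    have : ((m : k)) = 0 := by simpa [Nat.choose_one_right] using this
    exact hpm ((CharP.cast_eq_zero_iff k p m).mp this)
  refine ⟨n, ?_⟩
  rw [hfd, ← hdm, hm1, mul_one]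
end

section
/- Let p be a prime number and let B be a commutative ring of characteristic p. Suppose f ∈ B[X] satisfies f(X+Y) = f(X) + f(Y) and f(X·Y) = f(X)·f(Y) in B[X,Y]. Write f = Σ_i a_i X^i. Then: (i) a_i = 0 whenever i is not a power of p; (ii) each coefficient a_{p^n} is idempotent (a_{p^n}^2 = a_{p^n}); and (iii) a_{p^m} · a_{p^n} = 0 whenever m ≠ n. -/
open Polynomial

namespace Stmt6Aux

lemma exists_choose_not_dvd (p : ℕ) [Fact p.Prime] (i : ℕ) (hi2 : 2 ≤ i)
    (h : ∀ n : ℕ, i ≠ p ^ n) : ∃ j, 0 < j ∧ j < i ∧ ¬ p ∣ i.choose j := by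
  have hp := (Fact.out : p.Prime)
  have hi0 : i ≠ 0 := by omega
  obtain ⟨v, m, him, hpm⟩ : ∃ v m, i = p ^ v * m ∧ ¬ p ∣ m :=
    ⟨i.factorization p, i / p ^ i.factorization p,
      (Nat.ordProj_mul_ordCompl_eq_self i p).symm, Nat.not_dvd_ordCompl hp hi0⟩
  have hdiv : i / p ^ v = m := by rw [him, Nat.mul_div_cancel_left _ (pow_pos hp.pos v)]
  have hm1 : m ≠ 1 := fun h1 => h v (by rw [him, h1, mul_one])
  have hm0 : m ≠ 0 := fun h0 => hi0 (by rw [him, h0, mul_zero])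
  refine ⟨p ^ v, pow_pos hp.pos v, ?_, ?_⟩
  · rw [him]
    exact lt_mul_of_one_lt_right (pow_pos hp.pos v) (by omega)
  · have hluc := Choose.choose_modEq_choose_mul_prod_range_choose (p := p) (n := i) (k := p ^ v) v
    have hprod : ∀ t ∈ Finset.range v, (i / p ^ t % p).choose (p ^ v / p ^ t % p) = 1 := by
      intro t ht
      rw [Finset.mem_range] at ht
      have h0 : p ^ v / p ^ t % p = 0 := by
        have hvt : v - t = (v - t - 1) + 1 := by omega
        rw [Nat.pow_div ht.le hp.pos, hvt, pow_succ, mul_comm, Nat.mul_mod_right]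
      rw [h0, Nat.choose_zero_right]
    rw [hdiv, Nat.div_self (pow_pos hp.pos v), Nat.choose_one_right,
      Finset.prod_congr rfl hprod, Finset.prod_const_one, Nat.cast_one, mul_one] at hluc
    intro hdvd'
    have hz : ((i.choose (p ^ v) : ℤ) : ZMod p) = ((m : ℤ) : ZMod p) :=
      (ZMod.intCast_eq_intCast_iff _ _ _).mpr hluc
    push_cast at hz
    rw [(ZMod.natCast_eq_zero_iff _ p).mpr hdvd'] at hz
    exact hpm ((ZMod.natCast_eq_zero_iff m p).mp hz.symm)

variable {B : Type*} [CommRing B]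

local notation "M" => fun (j k : ℕ) => (Finsupp.single (0 : Fin 2) j + Finsupp.single (1 : Fin 2) k)

lemma mjk_eq_iff (a b j k : ℕ) :
    (Finsupp.single (0 : Fin 2) a + Finsupp.single 1 b
      = Finsupp.single (0 : Fin 2) j + Finsupp.single 1 k) ↔ a = j ∧ b = k := by
  constructor
  · intro h
    have h0 := DFunLike.congr_fun h 0
    have h1 := DFunLike.congr_fun h 1
    simp [Finsupp.single_apply] at h0 h1
    exact ⟨h0, h1⟩
  · rintro ⟨rfl, rfl⟩; rfl

lemma coeff_CXX (a b j k : ℕ) (c : B) :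
    MvPolynomial.coeff (M j k)
      (MvPolynomial.C c * MvPolynomial.X 0 ^ a * MvPolynomial.X 1 ^ b) =
      if a = j ∧ b = k then c else 0 := by
  rw [mul_assoc, MvPolynomial.coeff_C_mul, MvPolynomial.X_pow_eq_monomial,
    MvPolynomial.X_pow_eq_monomial, MvPolynomial.monomial_mul, MvPolynomial.coeff_monomial]
  simp only [mjk_eq_iff]
  split <;> simp

lemma coeff_add_pow' (i j k : ℕ) :
    MvPolynomial.coeff (M j k)
      ((MvPolynomial.X 0 + MvPolynomial.X 1 : MvPolynomial (Fin 2) B) ^ i) =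
      if j + k = i then (i.choose j : B) else 0 := by
  rw [add_pow, MvPolynomial.coeff_sum]
  have hterm : ∀ t ∈ Finset.range (i + 1),
      MvPolynomial.coeff (M j k)
        (MvPolynomial.X (0 : Fin 2) ^ t * MvPolynomial.X 1 ^ (i - t) * (i.choose t : MvPolynomial (Fin 2) B)) =
      if t = j ∧ i - t = k then (i.choose t : B) else 0 := by
    intro t _
    have h1 : MvPolynomial.X (0 : Fin 2) ^ t * MvPolynomial.X 1 ^ (i - t) *
        ((i.choose t : ℕ) : MvPolynomial (Fin 2) B)
        = MvPolynomial.C ((i.choose t : ℕ) : B) * MvPolynomial.X 0 ^ t * MvPolynomial.X 1 ^ (i - t) := by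
      rw [MvPolynomial.C_eq_coe_nat]; ring
    rw [h1, coeff_CXX]
  rw [Finset.sum_congr rfl hterm]
  by_cases h : j + k = i
  · rw [if_pos h, Finset.sum_eq_single_of_mem j (Finset.mem_range.mpr (by omega))]
    · rw [if_pos ⟨rfl, by omega⟩]
    · exact fun t _ ht => if_neg (fun hc => ht hc.1)
  · rw [if_neg h]
    refine Finset.sum_eq_zero fun t htr => if_neg ?_
    rw [Finset.mem_range] at htr
    rintro ⟨rfl, hk⟩; omega

lemma coeff_aeval_add (f : B[X]) (j k : ℕ) :
    MvPolynomial.coeff (M j k)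
      (Polynomial.aeval ((MvPolynomial.X 0 : MvPolynomial (Fin 2) B) + MvPolynomial.X 1) f) =
      f.coeff (j + k) * ((j + k).choose j : B) := by
  rw [Polynomial.aeval_def, Polynomial.eval₂_eq_sum, Polynomial.sum_def, MvPolynomial.coeff_sum]
  have hterm : ∀ i ∈ f.support,
      MvPolynomial.coeff (M j k) (algebraMap B (MvPolynomial (Fin 2) B) (f.coeff i) *
        (MvPolynomial.X 0 + MvPolynomial.X 1) ^ i) =
      if i = j + k then f.coeff i * ((j + k).choose j : B) else 0 := by
    intro i _
    rw [MvPolynomial.algebraMap_eq, MvPolynomial.coeff_C_mul, coeff_add_pow']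
    by_cases h : j + k = i
    · rw [if_pos h, if_pos h.symm, h]
    · rw [if_neg h, if_neg (fun hh => h hh.symm), mul_zero]
  rw [Finset.sum_congr rfl hterm, Finset.sum_ite_eq' f.support (j + k)
    (fun i => f.coeff i * ((j + k).choose j : B))]
  split_ifs with h
  · rfl
  · rw [Polynomial.notMem_support_iff.mp h, zero_mul]

lemma coeff_aeval_X0 (f : B[X]) (j k : ℕ) :
    MvPolynomial.coeff (M j k)
      (Polynomial.aeval (MvPolynomial.X 0 : MvPolynomial (Fin 2) B) f) =
      if k = 0 then f.coeff j else 0 := by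
  rw [Polynomial.aeval_def, Polynomial.eval₂_eq_sum, Polynomial.sum_def, MvPolynomial.coeff_sum]
  have hterm : ∀ i ∈ f.support,
      MvPolynomial.coeff (M j k) (algebraMap B (MvPolynomial (Fin 2) B) (f.coeff i) *
        MvPolynomial.X 0 ^ i) = if i = j ∧ 0 = k then f.coeff i else 0 := by
    intro i _
    have h1 : algebraMap B (MvPolynomial (Fin 2) B) (f.coeff i) * MvPolynomial.X 0 ^ i
        = MvPolynomial.C (f.coeff i) * MvPolynomial.X 0 ^ i * MvPolynomial.X 1 ^ 0 := by
      rw [MvPolynomial.algebraMap_eq, pow_zero, mul_one]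
    rw [h1, coeff_CXX]
  rw [Finset.sum_congr rfl hterm]
  by_cases hk : k = 0
  · subst hk
    rw [if_pos rfl]
    simp only [eq_self_iff_true, and_true]
    rw [Finset.sum_ite_eq' f.support j f.coeff]
    split_ifs with h
    · rfl
    · exact (Polynomial.notMem_support_iff.mp h).symm
  · rw [if_neg hk]
    refine Finset.sum_eq_zero fun i _ => if_neg ?_
    rintro ⟨_, h0⟩; exact hk h0.symm

lemma coeff_aeval_X1 (f : B[X]) (j k : ℕ) :
    MvPolynomial.coeff (M j k)
      (Polynomial.aeval (MvPolynomial.X 1 : MvPolynomial (Fin 2) B) f) =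
      if j = 0 then f.coeff k else 0 := by
  rw [Polynomial.aeval_def, Polynomial.eval₂_eq_sum, Polynomial.sum_def, MvPolynomial.coeff_sum]
  have hterm : ∀ i ∈ f.support,
      MvPolynomial.coeff (M j k) (algebraMap B (MvPolynomial (Fin 2) B) (f.coeff i) *
        MvPolynomial.X 1 ^ i) = if 0 = j ∧ i = k then f.coeff i else 0 := by
    intro i _
    have h1 : algebraMap B (MvPolynomial (Fin 2) B) (f.coeff i) * MvPolynomial.X 1 ^ i
        = MvPolynomial.C (f.coeff i) * MvPolynomial.X 0 ^ 0 * MvPolynomial.X 1 ^ i := by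
      rw [MvPolynomial.algebraMap_eq, pow_zero, mul_one]
    rw [h1, coeff_CXX]
  rw [Finset.sum_congr rfl hterm]
  by_cases hj : j = 0
  · subst hj
    rw [if_pos rfl]
    simp only [eq_self_iff_true, true_and]
    rw [Finset.sum_ite_eq' f.support k f.coeff]
    split_ifs with h
    · rfl
    · exact (Polynomial.notMem_support_iff.mp h).symm
  · rw [if_neg hj]
    refine Finset.sum_eq_zero fun i _ => if_neg ?_
    rintro ⟨h0, _⟩; exact hj h0.symm

lemma coeff_aeval_XX (f : B[X]) (j k : ℕ) :
    MvPolynomial.coeff (M j k)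
      (Polynomial.aeval ((MvPolynomial.X 0 : MvPolynomial (Fin 2) B) * MvPolynomial.X 1) f) =
      if j = k then f.coeff j else 0 := by
  rw [Polynomial.aeval_def, Polynomial.eval₂_eq_sum, Polynomial.sum_def, MvPolynomial.coeff_sum]
  have hterm : ∀ i ∈ f.support,
      MvPolynomial.coeff (M j k) (algebraMap B (MvPolynomial (Fin 2) B) (f.coeff i) *
        (MvPolynomial.X 0 * MvPolynomial.X 1) ^ i) =
      if i = j ∧ i = k then f.coeff i else 0 := by
    intro i _
    have h1 : algebraMap B (MvPolynomial (Fin 2) B) (f.coeff i) *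
        (MvPolynomial.X 0 * MvPolynomial.X 1) ^ i
        = MvPolynomial.C (f.coeff i) * MvPolynomial.X 0 ^ i * MvPolynomial.X 1 ^ i := by
      rw [MvPolynomial.algebraMap_eq, mul_pow]; ring
    rw [h1, coeff_CXX]
  rw [Finset.sum_congr rfl hterm]
  by_cases hjk : j = k
  · subst hjk
    rw [if_pos rfl]
    simp only [and_self]
    rw [Finset.sum_ite_eq' f.support j f.coeff]
    split_ifs with h
    · rfl
    · exact (Polynomial.notMem_support_iff.mp h).symm
  · rw [if_neg hjk]
    refine Finset.sum_eq_zero fun i _ => if_neg ?_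
    rintro ⟨h1, h2⟩; exact hjk (h1.symm.trans h2 ▸ rfl)

lemma coeff_aeval_mul (f : B[X]) (j k : ℕ) :
    MvPolynomial.coeff (M j k)
      (Polynomial.aeval (MvPolynomial.X 0 : MvPolynomial (Fin 2) B) f
        * Polynomial.aeval (MvPolynomial.X 1 : MvPolynomial (Fin 2) B) f) =
      f.coeff j * f.coeff k := by
  rw [Polynomial.aeval_def, Polynomial.aeval_def, Polynomial.eval₂_eq_sum,
    Polynomial.eval₂_eq_sum, Polynomial.sum_def, Polynomial.sum_def, Finset.sum_mul_sum,
    MvPolynomial.coeff_sum]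
  have hterm : ∀ i ∈ f.support,
      MvPolynomial.coeff (M j k)
        (∑ t ∈ f.support, algebraMap B (MvPolynomial (Fin 2) B) (f.coeff i) *
          MvPolynomial.X 0 ^ i * (algebraMap B (MvPolynomial (Fin 2) B) (f.coeff t) *
          MvPolynomial.X 1 ^ t)) =
      if i = j then f.coeff i * f.coeff k else 0 := by
    intro i _
    rw [MvPolynomial.coeff_sum]
    have h2 : ∀ t ∈ f.support,
        MvPolynomial.coeff (M j k) (algebraMap B (MvPolynomial (Fin 2) B) (f.coeff i) *
          MvPolynomial.X 0 ^ i * (algebraMap B (MvPolynomial (Fin 2) B) (f.coeff t) *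
          MvPolynomial.X 1 ^ t)) =
        if i = j ∧ t = k then f.coeff i * f.coeff t else 0 := by
      intro t _
      have h1 : algebraMap B (MvPolynomial (Fin 2) B) (f.coeff i) * MvPolynomial.X 0 ^ i *
          (algebraMap B (MvPolynomial (Fin 2) B) (f.coeff t) * MvPolynomial.X 1 ^ t)
          = MvPolynomial.C (f.coeff i * f.coeff t) * MvPolynomial.X 0 ^ i *
            MvPolynomial.X 1 ^ t := by
        rw [MvPolynomial.algebraMap_eq, map_mul]; ring
      rw [h1, coeff_CXX]
    rw [Finset.sum_congr rfl h2]
    by_cases hij : i = j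
    · subst hij
      rw [if_pos rfl]
      simp only [eq_self_iff_true, true_and]
      rw [Finset.sum_ite_eq' f.support k (fun t => f.coeff i * f.coeff t)]
      split_ifs with h
      · rfl
      · rw [Polynomial.notMem_support_iff.mp h, mul_zero]
    · rw [if_neg hij]
      exact Finset.sum_eq_zero fun t _ => if_neg (fun hc => hij hc.1)
  rw [Finset.sum_congr rfl hterm, Finset.sum_ite_eq' f.support j
    (fun i => f.coeff i * f.coeff k)]
  split_ifs with h
  · rfl
  · rw [Polynomial.notMem_support_iff.mp h, zero_mul]

end Stmt6Aux

open Stmt6Aux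

/-- Over a commutative ring `B` of characteristic `p`, if `f ∈ B[X]` satisfies
`f(X+Y) = f(X) + f(Y)` and `f(X·Y) = f(X)·f(Y)`, and `a_i` denotes the coefficient of `X^i`
in `f`, then: (i) `a_i = 0` unless `i` is a power of `p`; (ii) each `a_{p^n}` is idempotent;
(iii) `a_{p^m} · a_{p^n} = 0` for `m ≠ n`. -/
theorem stmt_6 (p : ℕ) [Fact p.Prime] (B : Type*) [CommRing B] [CharP B p]
    (f : B[X])
    (hadd : Polynomial.aeval ((MvPolynomial.X 0 : MvPolynomial (Fin 2) B) + MvPolynomial.X 1) f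
      = Polynomial.aeval (MvPolynomial.X 0 : MvPolynomial (Fin 2) B) f
        + Polynomial.aeval (MvPolynomial.X 1 : MvPolynomial (Fin 2) B) f)
    (hmul : Polynomial.aeval ((MvPolynomial.X 0 : MvPolynomial (Fin 2) B) * MvPolynomial.X 1) f
      = Polynomial.aeval (MvPolynomial.X 0 : MvPolynomial (Fin 2) B) f
        * Polynomial.aeval (MvPolynomial.X 1 : MvPolynomial (Fin 2) B) f) :
    (∀ i : ℕ, (∀ n : ℕ, i ≠ p ^ n) → f.coeff i = 0) ∧
    (∀ n : ℕ, f.coeff (p ^ n) * f.coeff (p ^ n) = f.coeff (p ^ n)) ∧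
    (∀ m n : ℕ, m ≠ n → f.coeff (p ^ m) * f.coeff (p ^ n) = 0) := by
  have hp := (Fact.out : p.Prime)
  have key_add : ∀ j k : ℕ, f.coeff (j + k) * ((j + k).choose j : B)
      = (if k = 0 then f.coeff j else 0) + (if j = 0 then f.coeff k else 0) := by
    intro j k
    have := congrArg (MvPolynomial.coeff
      (Finsupp.single (0 : Fin 2) j + Finsupp.single (1 : Fin 2) k)) hadd
    rwa [coeff_aeval_add, MvPolynomial.coeff_add, coeff_aeval_X0, coeff_aeval_X1] at this
  have key_mul : ∀ j k : ℕ, (if j = k then f.coeff j else 0) = f.coeff j * f.coeff k := by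
    intro j k
    have := congrArg (MvPolynomial.coeff
      (Finsupp.single (0 : Fin 2) j + Finsupp.single (1 : Fin 2) k)) hmul
    rwa [coeff_aeval_XX, coeff_aeval_mul] at this
  refine ⟨?_, ?_, ?_⟩
  · intro i hne
    rcases Nat.lt_or_ge i 2 with hi | hi
    · interval_cases i
      · have h0 := key_add 0 0
        rw [Nat.add_zero, Nat.choose_self, Nat.cast_one, mul_one, if_pos rfl] at h0
        exact left_eq_add.mp h0
      · exact absurd (pow_zero p).symm (hne 0)
    · obtain ⟨j, hj0, hji, hjd⟩ := exists_choose_not_dvd p i hi hne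
      have hk : i - j ≠ 0 := by omega
      have hkey := key_add j (i - j)
      rw [Nat.add_sub_cancel' hji.le] at hkey
      rw [if_neg hk, if_neg (by omega : j ≠ 0), add_zero] at hkey
      -- now f.coeff i * (i.choose j : B) = 0, and (i.choose j : B) is a unit
      have hu : ((i.choose j : ℕ) : ZMod p) ≠ 0 :=
        fun hz => hjd ((ZMod.natCast_eq_zero_iff _ p).mp hz)
      set e : B := ZMod.castHom (dvd_refl p) B ((i.choose j : ZMod p)⁻¹) with he
      have hce : ((i.choose j : ℕ) : B) * e = 1 := by
        have : ((i.choose j : ℕ) : B)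
            = ZMod.castHom (dvd_refl p) B ((i.choose j : ℕ) : ZMod p) := by
          rw [map_natCast]
        rw [this, he, ← map_mul, mul_inv_cancel₀ hu, map_one]
      calc f.coeff i = f.coeff i * (((i.choose j : ℕ) : B) * e) := by rw [hce, mul_one]
        _ = f.coeff i * ((i.choose j : ℕ) : B) * e := by ring
        _ = 0 := by rw [hkey, zero_mul]
  · intro n
    have := key_mul (p ^ n) (p ^ n)
    rw [if_pos rfl] at this
    exact this.symm
  · intro m n hmn
    have := key_mul (p ^ m) (p ^ n)
    rw [if_neg (fun hh => hmn (Nat.pow_right_injective hp.two_le hh))] at this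
    exact this.symm
end

section
/- Let k be a field of characteristic p > 0. Let U be the forgetful functor from the category of commutative k-algebras to the category of commutative rings. For every natural transformation η : U ⟶ U there exists a natural number n such that for every commutative k-algebra R and every r ∈ R one has η_R(r) = r^{p^n}; that is, every natural transformation of U is a power of the Frobenius. -/
universe u

open Polynomial

private lemma coeff_comp_C_mul_X {S : Type*} [CommSemiring S] (q : S[X]) (s : S) (j : ℕ) :
    (q.comp (C s * X)).coeff j = q.coeff j * s ^ j := by
  induction q using Polynomial.induction_on' with
  | add f g hf hg => simp [add_comp, coeff_add, hf, hg, add_mul]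
  | monomial i a =>
      rw [monomial_comp, mul_pow, ← C_pow, ← mul_assoc, ← C_mul, coeff_C_mul, coeff_X_pow,
        coeff_monomial]
      rcases eq_or_ne j i with rfl | h
      · simp
      · simp [h, Ne.symm h]

/-- Every natural transformation of the forgetful functor from commutative `k`-algebras to
commutative rings (`k` a field of characteristic `p > 0`) is a power of the Frobenius:
given ring homomorphisms `η_R : R →+* R`, natural with respect to all `k`-algebra
homomorphisms, there is `n : ℕ` with `η_R (r) = r ^ p ^ n` for all `R` and `r`. -/
theorem stmt_8 (p : ℕ) [Fact p.Prime] (k : Type u) [Field k] [CharP k p]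
    (η : ∀ (R : Type u) [CommRing R] [Algebra k R], R →+* R)
    (hnat : ∀ (R : Type u) [CommRing R] [Algebra k R] (S : Type u) [CommRing S] [Algebra k S]
      (f : R →ₐ[k] S), f.toRingHom.comp (η R) = (η S).comp f.toRingHom) :
    ∃ n : ℕ, ∀ (R : Type u) [CommRing R] [Algebra k R] (r : R), η R r = r ^ p ^ n := by
  classical
  have hp : p.Prime := Fact.out
  set q : Polynomial k := η (Polynomial k) X with hq
  -- η is given by evaluation of q
  have key : ∀ (R : Type u) [CommRing R] [Algebra k R] (r : R), η R r = aeval r q := by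
    intro R _ _ r
    have h := RingHom.congr_fun (hnat (Polynomial k) R (aeval r)) X
    simpa using h.symm
  -- aeval of q into a polynomial ring is composition with the mapped polynomial
  have haev : ∀ (t : Polynomial (Polynomial k)),
      aeval t q = (q.map (algebraMap k (Polynomial k))).comp t := by
    intro t
    rw [aeval_def, Polynomial.comp, eval₂_map,
      show (algebraMap k (Polynomial (Polynomial k))) = (C.comp (algebraMap k (Polynomial k)))
        from RingHom.ext fun x => Polynomial.algebraMap_apply ..]
  set q' : Polynomial (Polynomial k) := q.map (algebraMap k (Polynomial k)) with hq'
  -- multiplicativity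
  have hmul := map_mul (η (Polynomial (Polynomial k))) (C X) X
  rw [key, key, key, haev, haev, haev, comp_X, comp_C] at hmul
  -- q' evaluated at inner X is q itself
  have hqq : q'.eval (X : Polynomial k) = q := by
    rw [hq', eval_map]
    exact eval₂_C_X
  rw [hqq] at hmul
  -- q is nonzero
  have hq1 : aeval (1 : k) q = 1 := by
    rw [← key k 1, map_one]
  have hq0 : q ≠ 0 := by
    intro h
    rw [h, map_zero] at hq1
    exact zero_ne_one hq1
  -- from multiplicativity, q = X ^ n
  obtain ⟨n, hn⟩ : ∃ n : ℕ, q.coeff n ≠ 0 := by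
    by_contra h
    push_neg at h
    exact hq0 (Polynomial.ext h)
  have hxn : q = X ^ n := by
    have hc := congrArg (fun z => Polynomial.coeff z n) hmul
    simp only [coeff_comp_C_mul_X, coeff_C_mul] at hc
    rw [hq', coeff_map] at hc
    -- hc : algebraMap k (k[X]) (q.coeff n) * X ^ n = q * algebraMap k (k[X]) (q.coeff n)  (?)
    have hC : (algebraMap k (Polynomial k)) (q.coeff n) ≠ 0 := by
      simpa using hn
    rw [mul_comm q _] at hc
    exact (mul_left_cancel₀ hC hc).symm
  -- additivity: (1 + X)^n = 1 + X^n in k[X]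
  have hadd := map_add (η (Polynomial (Polynomial k))) (C X) X
  rw [key, key, key, hxn] at hadd
  simp only [map_pow, aeval_X, aeval_C] at hadd
  -- hadd : (algebraMap k[X] k[X][X] X + X) ^ n = (algebraMap ... X) ^ n + X ^ n  (?)
  have hbin : (1 + X : Polynomial k) ^ n = 1 + X ^ n := by
    have := congrArg (eval₂RingHom (C.comp (evalRingHom (1 : k))) (X : Polynomial k)) hadd
    simpa [eval₂_pow, eval₂_add, eval₂_X, eval₂_C, RingHom.comp_apply] using this
  have hn0 : n ≠ 0 := by
    intro h
    rw [h] at hbin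
    simp at hbin
  set a := n.factorization p with ha
  set b := n / p ^ a with hb
  have hpb : ¬ p ∣ b := Nat.not_dvd_ordCompl hp hn0
  have hnab : p ^ a * b = n := Nat.ordProj_mul_ordCompl_eq_self n p
  have hfrob : (1 + X : Polynomial k) ^ p ^ a = 1 + X ^ p ^ a := by
    simpa using add_pow_char_pow (R := Polynomial k) (x := 1) (y := X) p a
  have h2 : (1 + X ^ p ^ a : Polynomial k) ^ b = 1 + (X ^ p ^ a) ^ b := by
    rw [← hfrob, ← pow_mul, hnab, hbin, ← pow_mul, hnab]
  have h3 : (expand k (p ^ a)) ((1 + X) ^ b) = (expand k (p ^ a)) (1 + X ^ b) := by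
    rw [map_pow, map_add, map_one, expand_X, map_add, map_one, map_pow, expand_X, h2]
  have h4 : (1 + X : Polynomial k) ^ b = 1 + X ^ b :=
    expand_injective (pow_pos hp.pos a) h3
  have hb1 : b = 1 := by
    by_contra hb1
    have hcc := congrArg (fun z => Polynomial.coeff z 1) h4
    simp only [coeff_one_add_X_pow, Nat.choose_one_right] at hcc
    have hbk : (b : k) = 0 := by
      simpa [coeff_add, coeff_one, coeff_X_pow, hb1, Ne.symm hb1] using hcc
    exact hpb ((CharP.cast_eq_zero_iff k p b).mp hbk)
  refine ⟨a, ?_⟩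
  intro R _ _ r
  rw [key, hxn, map_pow, aeval_X, ← hnab, hb1, mul_one]
end

section
/- Let k be a field of characteristic p > 0. Let U be the forgetful functor from the category of commutative k-algebras to the category of commutative rings. Then every natural isomorphism from U to itself is the identity natural transformation. -/
universe u

/-- Every natural isomorphism of the forgetful functor from commutative `k`-algebras to
commutative rings (`k` a field of characteristic `p > 0`) is the identity: given ring
isomorphisms `η_R : R ≃+* R`, natural with respect to all `k`-algebra homomorphisms,
each `η_R` is the identity. -/
theorem stmt_9 (p : ℕ) [Fact p.Prime] (k : Type u) [Field k] [CharP k p]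
    (η : ∀ (R : Type u) [CommRing R] [Algebra k R], R ≃+* R)
    (hnat : ∀ (R : Type u) [CommRing R] [Algebra k R] (S : Type u) [CommRing S] [Algebra k S]
      (f : R →ₐ[k] S),
      f.toRingHom.comp ((η R : R ≃+* R) : R →+* R) = ((η S : S ≃+* S) : S →+* S).comp f.toRingHom) :
    ∀ (R : Type u) [CommRing R] [Algebra k R] (r : R), η R r = r := by
  classical
  -- `q` is the value of `η` on the polynomial variable `X` in `k[X]`.
  -- By naturality (mapping `X ↦ r`), `η R r = aeval r q` for every `k`-algebra `R`.
  have key : ∀ (R : Type u) [CommRing R] [Algebra k R] (r : R),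
      η R r = Polynomial.aeval r (η (Polynomial k) Polynomial.X) := by
    intro R _ _ r
    have h' := RingHom.congr_fun (hnat (Polynomial k) R (Polynomial.aeval r)) Polynomial.X
    simpa using h'.symm
  set q : Polynomial k := η (Polynomial k) Polynomial.X with hq
  -- on `k[X]` itself, `η` is composition with `q`
  have keyA : ∀ s : Polynomial k, η (Polynomial k) s = q.comp s := by
    intro s
    rw [key (Polynomial k) s, Polynomial.comp, Polynomial.aeval_def, Polynomial.algebraMap_eq]
  -- coeff 0 of q is 0
  have h0 : q.coeff 0 = 0 := by
    have h := keyA 0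
    rw [map_zero] at h
    have h2 : Polynomial.C (q.eval 0) = (0 : Polynomial k) := by
      rw [← Polynomial.comp_zero (p := q), ← h]
    rw [Polynomial.C_eq_zero] at h2
    rwa [Polynomial.coeff_zero_eq_eval_zero]
  -- eval 1 of q is 1
  have h1 : q.eval 1 = 1 := by
    have h := keyA 1
    rw [map_one] at h
    have h2 : Polynomial.C (q.eval 1) = (1 : Polynomial k) := by
      rw [← Polynomial.comp_one (p := q), ← h]
    rwa [← Polynomial.C_1, Polynomial.C_inj] at h2
  -- surjectivity: some s with q.comp s = X, hence natDegree q = 1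
  obtain ⟨s, hs⟩ := (η (Polynomial k)).surjective Polynomial.X
  rw [keyA] at hs
  have hdeg : q.natDegree * s.natDegree = 1 := by
    have h := congrArg Polynomial.natDegree hs
    rwa [Polynomial.natDegree_comp, Polynomial.natDegree_X] at h
  have hq1 : q.natDegree = 1 := Nat.eq_one_of_mul_eq_one_right hdeg
  -- hence q = X
  have hqX : q = Polynomial.X := by
    have hform := Polynomial.eq_X_add_C_of_natDegree_le_one (le_of_eq hq1)
    have he : q.eval 1 = q.coeff 1 + q.coeff 0 := by
      rw [hform]; simp
    rw [h0, h1, add_zero] at he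
    rw [hform, ← he, h0]
    simp
  intro R _ _ r
  rw [key R r, hqX, Polynomial.aeval_X]
end
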